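/- For every odd integer n ≥ 1, every real a ≥ 1, and every x ∈ (0, π): ∑_{j=1}^n C(n + a − j, n − j) sin(jx) ≥ sin(x), with equality if and only if n = 1, or n = 3, a = 1 and x = 2π/3. -/

import Mathlib

open Real Finset

/-- Generalized binomial coefficient `(a + k choose k) = ∏_{ν=1}^{k} (a+ν)/ν`. -/
noncomputable def gbinom (a : ℝ) (k : ℕ) : ℝ := ∏ ν ∈ Finset.Icc 1 k, (a + ν) / ν

/-- `S n a x = ∑_{j=1}^n C(n+a−j, n−j) sin(jx)`. -/
noncomputable def S (n : ℕ) (a : ℝ) (x : ℝ) : ℝ :=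
  ∑ j ∈ Finset.Icc 1 n, gbinom a (n - j) * Real.sin (j * x)





lemma gbinom_zero (a : ℝ) : gbinom a 0 = 1 := by simp [gbinom]

lemma gbinom_succ (a : ℝ) (k : ℕ) :
    gbinom a (k+1) = gbinom a k * ((a + ((k:ℝ)+1)) / ((k:ℝ)+1)) := by
  unfold gbinom
  rw [Finset.prod_Icc_succ_top (by omega)]
  push_cast
  ring

lemma gbinom_pos (a : ℝ) (ha : 1 ≤ a) (k : ℕ) : 0 < gbinom a k := by
  apply Finset.prod_pos
  intro ν hν
  simp only [Finset.mem_Icc] at hν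
  have h1 : (1:ℝ) ≤ (ν:ℝ) := by exact_mod_cast hν.1
  positivity

lemma gbinom_convex (a : ℝ) (k : ℕ) :
    gbinom a (k+2) - 2 * gbinom a (k+1) + gbinom a k
      = gbinom a k * (a * (a-1) / (((k:ℝ)+1) * ((k:ℝ)+2))) := by
  rw [show k+2 = (k+1)+1 from rfl, gbinom_succ, gbinom_succ]
  have h1 : ((k:ℝ)+1) ≠ 0 := by positivity
  have h2 : ((k:ℝ)+2) ≠ 0 := by positivity
  push_cast
  field_simp
  ring

/-- generic Abel summation -/
lemma abel_sum (f d : ℕ → ℝ) (n : ℕ) :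
    ∑ j ∈ Icc 1 n, d j * f j
      = ∑ j ∈ Icc 1 n, (d j - d (j+1)) * (∑ k ∈ Icc 1 j, f k)
        + d (n+1) * ∑ k ∈ Icc 1 n, f k := by
  induction n with
  | zero => simp
  | succ n ih =>
    rw [Finset.sum_Icc_succ_top (by omega), Finset.sum_Icc_succ_top (by omega) f,
        Finset.sum_Icc_succ_top (by omega : 1 ≤ n+1)
          (fun j => (d j - d (j+1)) * (∑ k ∈ Icc 1 j, f k)), ih,
        Finset.sum_Icc_succ_top (by omega) f]
    ring


noncomputable def Dk (x : ℝ) (m : ℕ) : ℝ := ∑ k ∈ Icc 1 m, Real.sin (k * x)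
noncomputable def Fk (x : ℝ) (m : ℕ) : ℝ := ∑ j ∈ Icc 1 m, Dk x j

lemma Dk_id (x : ℝ) (m : ℕ) :
    2 * Real.sin (x/2) * Dk x m = Real.cos (x/2) - Real.cos (m * x + x/2) := by
  induction m with
  | zero => simp [Dk]
  | succ m ih =>
    have hD : Dk x (m+1) = Dk x m + Real.sin ((m+1) * x) := by
      unfold Dk
      rw [Finset.sum_Icc_succ_top (by omega)]
      push_cast; ring
    rw [hD, mul_add, ih]
    have h1 : (m:ℝ) * x + x/2 = ((m:ℝ)+1) * x - x/2 := by ring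
    have h2 : ((m:ℕ)+1 : ℝ) * x + x/2 = ((m:ℝ)+1) * x + x/2 := by push_cast; ring
    push_cast
    rw [h1, Real.cos_sub, Real.cos_add]
    ring

lemma Fk_id (x : ℝ) (m : ℕ) :
    4 * Real.sin (x/2)^2 * Fk x m = ((m:ℝ)+1) * Real.sin x - Real.sin (((m:ℝ)+1) * x) := by
  induction m with
  | zero => simp [Fk]
  | succ m ih =>
    have hF : Fk x (m+1) = Fk x m + Dk x (m+1) := by
      unfold Fk
      rw [Finset.sum_Icc_succ_top (by omega)]
    have hDD := Dk_id x (m+1)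
    have h4 : 4 * Real.sin (x/2)^2 * Dk x (m+1)
        = 2 * Real.sin (x/2) * (Real.cos (x/2) - Real.cos ((m+1) * x + x/2)) := by
      push_cast at hDD ⊢
      linear_combination (2 * Real.sin (x/2)) * hDD
    rw [hF, mul_add, ih, h4]
    have hs : Real.sin x = 2 * Real.sin (x/2) * Real.cos (x/2) := by
      rw [← Real.sin_two_mul]; ring_nf
    have hsub : Real.sin (((m:ℝ)+1) * x) = Real.sin ((((m:ℝ)+1) * x + x/2) - x/2) := by ring_nf
    have hadd : Real.sin (((m:ℝ)+1+1) * x) = Real.sin ((((m:ℝ)+1) * x + x/2) + x/2) := by ring_nf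
    push_cast
    rw [hadd, hsub, Real.sin_add, Real.sin_sub, hs]
    ring

lemma abs_sin_le (x : ℝ) (k : ℕ) : |Real.sin (k * x)| ≤ k * |Real.sin x| := by
  induction k with
  | zero => simp
  | succ k ih =>
    have : ((k:ℝ)+1) * x = (k:ℝ) * x + x := by ring
    push_cast
    rw [this, Real.sin_add]
    calc |Real.sin ((k:ℝ)*x) * Real.cos x + Real.cos ((k:ℝ)*x) * Real.sin x|
        ≤ |Real.sin ((k:ℝ)*x) * Real.cos x| + |Real.cos ((k:ℝ)*x) * Real.sin x| := abs_add_le _ _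
      _ ≤ |Real.sin ((k:ℝ)*x)| + |Real.sin x| := by
          rw [abs_mul, abs_mul]
          gcongr
          · exact mul_le_of_le_one_right (abs_nonneg _) (abs_cos_le_one x)
          · exact mul_le_of_le_one_left (abs_nonneg _) (abs_cos_le_one _)
      _ ≤ (k:ℝ) * |Real.sin x| + |Real.sin x| := by gcongr
      _ = ((k:ℝ)+1) * |Real.sin x| := by ring

lemma abs_sin_lt (x : ℝ) (hx0 : 0 < x) (hxp : x < π) (k : ℕ) (hk : 2 ≤ k) :
    |Real.sin (k * x)| < k * Real.sin x := by
  have hsx : 0 < Real.sin x := Real.sin_pos_of_pos_of_lt_pi hx0 hxp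
  have hcos : |Real.cos x| < 1 := by
    rw [← sq_lt_one_iff_abs_lt_one]
    nlinarith [Real.sin_sq_add_cos_sq x]
  induction k, hk using Nat.le_induction with
  | base =>
      have h2 : ((2:ℕ):ℝ) * x = 2 * x := by norm_num
      rw [h2, Real.sin_two_mul, abs_mul, abs_mul]
      rw [abs_of_nonneg (by norm_num : (0:ℝ) ≤ 2), abs_of_pos hsx]
      push_cast
      nlinarith
  | succ k hk ih =>
      have hkx : ((k:ℝ)+1) * x = (k:ℝ) * x + x := by ring
      push_cast
      rw [hkx, Real.sin_add]
      calc |Real.sin ((k:ℝ)*x) * Real.cos x + Real.cos ((k:ℝ)*x) * Real.sin x|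
          ≤ |Real.sin ((k:ℝ)*x) * Real.cos x| + |Real.cos ((k:ℝ)*x) * Real.sin x| := abs_add_le _ _
        _ ≤ |Real.sin ((k:ℝ)*x)| + Real.sin x := by
            rw [abs_mul, abs_mul, abs_of_pos hsx]
            gcongr
            · exact mul_le_of_le_one_right (abs_nonneg _) (abs_cos_le_one x)
            · exact mul_le_of_le_one_left (le_of_lt hsx) (abs_cos_le_one _)
        _ < (k:ℝ) * Real.sin x + Real.sin x := by
            have := ih
            push_cast at this
            linarith
        _ = ((k:ℝ)+1) * Real.sin x := by ring
lemma sin_half_pos {x : ℝ} (hx0 : 0 < x) (hxp : x < π) : 0 < Real.sin (x/2) :=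
  Real.sin_pos_of_pos_of_lt_pi (by linarith) (by linarith [Real.pi_pos])

lemma Fk_pos {x : ℝ} (hx0 : 0 < x) (hxp : x < π) (m : ℕ) (hm : 1 ≤ m) : 0 < Fk x m := by
  have hs2 := sin_half_pos hx0 hxp
  have hid := Fk_id x m
  have h1 : Real.sin (((m:ℝ)+1)*x) < ((m:ℝ)+1) * Real.sin x := by
    have h2 := abs_sin_lt x hx0 hxp (m+1) (by omega)
    push_cast at h2
    calc Real.sin (((m:ℝ)+1)*x) ≤ |Real.sin (((m:ℝ)+1)*x)| := le_abs_self _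
      _ < ((m:ℝ)+1) * Real.sin x := h2
  nlinarith [hid, h1, hs2]


lemma cos_sin_le (A B : ℝ) : Real.cos A * Real.sin B ≤ |Real.sin B| := by
  calc Real.cos A * Real.sin B ≤ |Real.cos A * Real.sin B| := le_abs_self _
    _ = |Real.cos A| * |Real.sin B| := abs_mul _ _
    _ ≤ 1 * |Real.sin B| :=
        mul_le_mul_of_nonneg_right (abs_cos_le_one A) (abs_nonneg _)
    _ = |Real.sin B| := one_mul _


lemma gkey (n : ℕ) (hn : 1 ≤ n) (hodd : Odd n) {x : ℝ} (hx0 : 0 < x) (hxp : x < π) :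
    Real.sin (((n:ℝ)+1)*x) ≤ ((n:ℝ)-1)*Real.sin x + Real.sin (2*x) ∧
    (Real.sin (((n:ℝ)+1)*x) = ((n:ℝ)-1)*Real.sin x + Real.sin (2*x)
      ↔ n = 1 ∨ (n = 3 ∧ x = 2*π/3)) := by
  have hsx : 0 < Real.sin x := Real.sin_pos_of_pos_of_lt_pi hx0 hxp
  obtain ⟨k, hk⟩ := hodd
  subst hk
  have hcast : ((2*k+1:ℕ):ℝ) = 2*(k:ℝ)+1 := by push_cast; ring
  rw [hcast]
  have hid : Real.sin ((2*(k:ℝ)+1+1)*x) - Real.sin (2*x)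
      = 2 * Real.cos (((k:ℝ)+2)*x) * Real.sin ((k:ℝ)*x) := by
    rw [show (2*(k:ℝ)+1+1)*x = ((k:ℝ)+2)*x + (k:ℝ)*x by ring,
        show (2:ℝ)*x = ((k:ℝ)+2)*x - (k:ℝ)*x by ring, Real.sin_add, Real.sin_sub]
    ring
  have habs : |Real.sin ((k:ℝ)*x)| ≤ (k:ℝ) * Real.sin x := by
    have := abs_sin_le x k
    rwa [abs_of_pos hsx] at this
  have hb : 2 * Real.cos (((k:ℝ)+2)*x) * Real.sin ((k:ℝ)*x) ≤ 2*(k:ℝ)*Real.sin x := by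
    have h1 := cos_sin_le (((k:ℝ)+2)*x) ((k:ℝ)*x)
    linarith
  have hco : (2*(k:ℝ)+1-1) = 2*(k:ℝ) := by ring
  rw [hco]
  refine ⟨by linarith, ?_⟩
  rcases k with _ | _ | k
  · -- k = 0, n = 1
    constructor
    · intro _; left; rfl
    · intro _
      push_cast at hid ⊢
      norm_num at hid ⊢
  · -- k = 1, n = 3
    have h1r : ((1:ℕ):ℝ) = 1 := by norm_num
    rw [h1r] at hid hb ⊢
    constructor
    · intro heq
      right
      refine ⟨rfl, ?_⟩
      have h2 : Real.cos ((1+2)*x) * Real.sin x = Real.sin x := by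
        rw [one_mul] at hid
        linarith
      have hc1 : Real.cos ((1+2)*x) = 1 := by
        have hne := ne_of_gt hsx
        field_simp at h2
        tauto
      rw [Real.cos_eq_one_iff] at hc1
      obtain ⟨m, hm⟩ := hc1
      have hpi := Real.pi_pos
      rw [show ((1:ℝ)+2)*x = 3*x by ring] at hm
      have hm1 : m = 1 := by
        have hm0 : 0 < m := by
          by_contra hcon
          push_neg at hcon
          have : (m:ℝ) ≤ 0 := by exact_mod_cast hcon
          nlinarith
        have hm2 : m < 2 := by
          by_contra hcon
          push_neg at hcon
          have : (2:ℝ) ≤ (m:ℝ) := by exact_mod_cast hcon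
          nlinarith
        omega
      rw [hm1] at hm
      push_cast at hm
      linarith
    · rintro (h | ⟨-, hx3⟩)
      · omega
      · subst hx3
        have hcs : Real.cos (((1:ℝ)+2)*(2*π/3)) = 1 := by
          rw [show ((1:ℝ)+2)*(2*π/3) = 2*π by ring]
          exact Real.cos_two_pi
        rw [hcs] at hid
        rw [one_mul] at hid
        linarith
  · -- k ≥ 2, n ≥ 5 : strict
    constructor
    · intro heq
      exfalso
      have hstrict := abs_sin_lt x hx0 hxp (k+2) (by omega)
      have h1 := cos_sin_le (((k:ℝ)+4)*x) (((k:ℝ)+2)*x)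
      push_cast at hid heq hstrict
      ring_nf at hid heq hstrict h1
      nlinarith [hsx, h1, hstrict, hid, heq]
    · rintro (h | ⟨h, -⟩) <;> omega

lemma Fk_sin_id (x : ℝ) (n : ℕ) :
    4 * Real.sin (x/2)^2 * (Fk x n - Real.sin x)
      = ((n:ℝ)-1)*Real.sin x + Real.sin (2*x) - Real.sin (((n:ℝ)+1)*x) := by
  have h := Fk_id x n
  have hc : Real.cos x = 1 - 2*Real.sin (x/2)^2 := by
    have h2 := Real.cos_two_mul (x/2)
    rw [show 2*(x/2) = x by ring] at h2
    nlinarith [Real.sin_sq_add_cos_sq (x/2)]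
  have hs : Real.sin (2*x) = 2*Real.sin x*Real.cos x := Real.sin_two_mul x
  linear_combination h - hs - 2*Real.sin x*hc
noncomputable def bb (n : ℕ) (a : ℝ) (j : ℕ) : ℝ := if j ≤ n then gbinom a (n - j) else 0

noncomputable def ww (n : ℕ) (a : ℝ) (j : ℕ) : ℝ := bb n a j - 2 * bb n a (j+1) + bb n a (j+2)


lemma bb_le (n : ℕ) (a : ℝ) (j : ℕ) (h : j ≤ n) : bb n a j = gbinom a (n - j) := by
  unfold bb; rw [if_pos h]

lemma bb_gt (n : ℕ) (a : ℝ) (j : ℕ) (h : n < j) : bb n a j = 0 := by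
  unfold bb; rw [if_neg (by omega)]

lemma ww_def (n : ℕ) (a : ℝ) (j : ℕ) :
    ww n a j = bb n a j - 2 * bb n a (j+1) + bb n a (j+2) := rfl

lemma S_eq (n : ℕ) (a x : ℝ) : S n a x = ∑ j ∈ Icc 1 n, ww n a j * Fk x j := by
  have e1 : S n a x = ∑ j ∈ Icc 1 n, bb n a j * Real.sin (j * x) := by
    rw [S]
    apply Finset.sum_congr rfl
    intro j hj
    simp only [Finset.mem_Icc] at hj
    rw [bb_le n a j hj.2]
  rw [e1, abel_sum (fun j => Real.sin (j * x)) (bb n a) n]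
  have hb1 : bb n a (n+1) = 0 := bb_gt n a _ (by omega)
  have hb2 : bb n a (n+2) = 0 := bb_gt n a _ (by omega)
  have e2 : ∀ j : ℕ, (∑ k ∈ Icc 1 j, Real.sin ((k:ℕ) * x)) = Dk x j :=
    fun j => rfl
  simp only [e2, hb1, zero_mul, add_zero]
  rw [abel_sum (Dk x) (fun j => bb n a j - bb n a (j+1)) n]
  have e3 : ∀ j : ℕ, (∑ k ∈ Icc 1 j, Dk x k) = Fk x j := fun j => rfl
  simp only [e3, hb1, hb2, sub_zero, zero_mul, add_zero, zero_sub, neg_zero]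
  apply Finset.sum_congr rfl
  intro j _
  rw [ww_def]
  ring

lemma ww_top (n : ℕ) (a : ℝ) : ww n a n = 1 := by
  rw [ww_def, bb_le n a n le_rfl, bb_gt n a _ (by omega), bb_gt n a _ (by omega),
      Nat.sub_self, gbinom_zero]
  ring

lemma ww_pred (n j : ℕ) (a : ℝ) (h : j + 1 = n) : ww n a j = a - 1 := by
  rw [ww_def, bb_le n a j (by omega), bb_le n a (j+1) (by omega), bb_gt n a (j+2) (by omega),
      show n - j = 0 + 1 by omega, show n - (j+1) = 0 by omega, gbinom_succ, gbinom_zero]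
  push_cast
  ring

lemma ww_mid (n j : ℕ) (a : ℝ) (h : j + 2 ≤ n) :
    ww n a j = gbinom a (n-j-2)
      * (a * (a-1) / (((((n-j-2:ℕ)):ℝ)+1) * ((((n-j-2:ℕ)):ℝ)+2))) := by
  obtain ⟨k, hk⟩ : ∃ k, n - j = k + 2 := ⟨n-j-2, by omega⟩
  have h2 : n - j - 2 = k := by omega
  rw [ww_def, bb_le n a j (by omega), bb_le n a (j+1) (by omega), bb_le n a (j+2) (by omega),
      h2, show n - (j+1) = k+1 by omega, show n - (j+2) = k by omega, hk,
      ← gbinom_convex a k]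
theorem stmt_6 (n : ℕ) (hn : 1 ≤ n) (hodd : Odd n) (a : ℝ) (ha : 1 ≤ a)
    (x : ℝ) (hx : x ∈ Set.Ioo 0 Real.pi) :
    Real.sin x ≤ S n a x ∧
    (S n a x = Real.sin x ↔ n = 1 ∨ (n = 3 ∧ a = 1 ∧ x = 2 * Real.pi / 3)) := by
  obtain ⟨hx0, hxp⟩ := hx
  have hsx : 0 < Real.sin x := Real.sin_pos_of_pos_of_lt_pi hx0 hxp
  have hs2 : 0 < Real.sin (x/2) := sin_half_pos hx0 hxp
  have h4s : 0 < 4 * Real.sin (x/2)^2 := by positivity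
  have hgk := gkey n hn hodd hx0 hxp
  have hFid := Fk_sin_id x n
  have hFn : 0 ≤ Fk x n - Real.sin x := by nlinarith [hgk.1]
  have hw_nonneg : ∀ j ∈ Icc 1 (n-1), 0 ≤ ww n a j * Fk x j := by
    intro j hj
    simp only [Finset.mem_Icc] at hj
    have hF : 0 < Fk x j := Fk_pos hx0 hxp j hj.1
    rcases Nat.lt_or_ge (j+1) n with h | h
    · rw [ww_mid n j a (by omega)]
      have := gbinom_pos a ha (n-j-2)
      have h1 : (0:ℝ) < (((n-j-2:ℕ)):ℝ)+1 := by positivity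
      have h2 : (0:ℝ) < (((n-j-2:ℕ)):ℝ)+2 := by positivity
      have ha1 : 0 ≤ a - 1 := by linarith
      positivity
    · have hj1 : j + 1 = n := by omega
      rw [ww_pred n j a hj1]
      nlinarith
  have hsplit : S n a x
      = (∑ j ∈ Icc 1 (n-1), ww n a j * Fk x j) + Fk x n := by
    rw [S_eq]
    have h := Finset.sum_Icc_succ_top (by omega : 1 ≤ (n-1)+1)
      (fun j => ww n a j * Fk x j)
    rw [show n-1+1 = n by omega] at h
    rw [h, ww_top, one_mul]
  have hsum_nonneg : 0 ≤ ∑ j ∈ Icc 1 (n-1), ww n a j * Fk x j :=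
    Finset.sum_nonneg hw_nonneg
  constructor
  · linarith
  constructor
  · intro heq
    by_cases hn1 : n = 1
    · exact Or.inl hn1
    right
    have hn3 : 3 ≤ n := by
      obtain ⟨k, hk⟩ := hodd
      omega
    have hzero : (∑ j ∈ Icc 1 (n-1), ww n a j * Fk x j) = 0 ∧ Fk x n - Real.sin x = 0 := by
      constructor <;> linarith
    have hterm : ww n a (n-1) * Fk x (n-1) = 0 := by
      have := (Finset.sum_eq_zero_iff_of_nonneg hw_nonneg).1 hzero.1 (n-1)
        (by simp only [Finset.mem_Icc]; omega)
      exact this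
    have hFpos : 0 < Fk x (n-1) := Fk_pos hx0 hxp (n-1) (by omega)
    have hw0 : ww n a (n-1) = 0 := by
      rcases mul_eq_zero.1 hterm with h | h
      · exact h
      · exact absurd h (ne_of_gt hFpos)
    have ha1 : a = 1 := by
      rw [ww_pred n (n-1) a (by omega)] at hw0
      linarith
    have hg0 : Real.sin (((n:ℝ)+1)*x) = ((n:ℝ)-1)*Real.sin x + Real.sin (2*x) := by
      have h1 : 4 * Real.sin (x/2)^2 * (Fk x n - Real.sin x) = 0 := by
        rw [hzero.2]; ring
      rw [hFid] at h1
      linarith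
    rcases hgk.2.1 hg0 with h | ⟨h3, hx3⟩
    · omega
    · exact ⟨h3, ha1, hx3⟩
  · rintro (h1 | ⟨h3, ha1, hx3⟩)
    · subst h1
      rw [hsplit]
      have hz : (∑ j ∈ Icc 1 (1-1), ww 1 a j * Fk x j) = 0 := by simp
      rw [hz, zero_add]
      simp [Fk, Dk]
    · subst h3; subst ha1; subst hx3
      have hwz : ∀ j ∈ Icc 1 (3-1), ww 3 1 j * Fk (2*π/3) j = 0 := by
        intro j hj
        simp only [Finset.mem_Icc] at hj
        have hj12 : j = 1 ∨ j = 2 := by omega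
        rcases hj12 with rfl | rfl
        · rw [ww_mid 3 1 1 (by omega)]
          norm_num
        · rw [ww_pred 3 2 1 (by omega)]
          norm_num
      have hs0 : (∑ j ∈ Icc 1 (3-1), ww 3 1 j * Fk (2*π/3) j) = 0 :=
        Finset.sum_eq_zero hwz
      have heqg := hgk.2.mpr (Or.inr ⟨rfl, rfl⟩)
      have h0 : 4*Real.sin ((2*π/3)/2)^2 * (Fk (2*π/3) 3 - Real.sin (2*π/3)) = 0 := by
        rw [hFid]; linarith
      have hF0 : Fk (2*π/3) 3 - Real.sin (2*π/3) = 0 := by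
        rcases mul_eq_zero.1 h0 with h | h
        · exact absurd h (ne_of_gt h4s)
        · exact h
      rw [hsplit, hs0, zero_add]
      linarith
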